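/- Let T be a triangulated category with suspension functor Σ and let T be a tilting object in T, i.e. T coincides with the closure of T under suspensions, desuspensions, extensions and direct factors, and Hom(T, ΣⁿT) = 0 for all integers n ≠ 0. Suppose T = T₀ ⊕ T₁, and suppose there is a morphism f: T₀ → B such that: (1) B belongs to add(T₁) (the closure of T₁ under finite direct sums and direct summands); (2) the induced map f*: Hom(B, T₁) → Hom(T₀, T₁) is surjective; (3) the induced map f_*: Hom(T₁, T₀) → Hom(T₁, B) is injective. Choose a triangle T₀ → B → T₀* → ΣT₀ with first morphism f. Then T' = T₀* ⊕ T₁ is a tilting object in T. -/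

import Mathlib

/-! The triangle `T₀ → B → T₀* → ΣT₀` with `B ∈ add T₁` puts `T₀` in the thick closure of
`T₀* ⊕ T₁`, which therefore generates. For the vanishing, the long exact Hom-sequences of the
triangle reduce `Hom(T₁, ΣⁿT₀*)`, `Hom(T₀*, ΣⁿT₁)` and `Hom(T₀*, ΣⁿT₀*)` to the vanishing for
`T₀ ⊕ T₁`, except in one boundary degree each: injectivity of `f_*` kills `Hom(T₁, Σ⁻¹T₀*)`,
surjectivity of `f*` kills `Hom(T₀*, ΣT₁)`, and `Hom(T₀*, ΣT₀*)` vanishes because every map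
`T₀ → T₀*` factors through `B` while `Hom(T₀*, ΣB) = 0`. -/

open CategoryTheory CategoryTheory.Limits CategoryTheory.Pretriangulated

universe u v

section Statement

variable {T : Type u} [Category.{v} T] [Preadditive T] [HasZeroObject T] [HasShift T ℤ]
  [∀ n : ℤ, (CategoryTheory.shiftFunctor T n).Additive] [Pretriangulated T]
  [IsTriangulated T] [HasFiniteBiproducts T]

/-- The closure of an object `G` of a triangulated category under isomorphisms,
suspensions, desuspensions, extensions and direct factors. -/
inductive triangGen (G : T) : T → Prop
  | gen : triangGen G G
  | iso {X Y : T} (e : X ≅ Y) : triangGen G X → triangGen G Y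
  | shift {X : T} (n : ℤ) : triangGen G X → triangGen G (X⟦n⟧)
  | ext {X Y Z : T} (f : X ⟶ Y) (g : Y ⟶ Z) (h : Z ⟶ X⟦(1 : ℤ)⟧)
      (hT : Triangle.mk f g h ∈ distTriang T) : triangGen G X → triangGen G Z →
      triangGen G Y
  | smd {X Y : T} (s : Y ⟶ X) (r : X ⟶ Y) (hr : s ≫ r = 𝟙 Y) :
      triangGen G X → triangGen G Y

/-- `B` belongs to `add X`, the closure of `X` under finite direct sums and direct
summands. -/
def memAdd (X B : T) : Prop :=
  ∃ (n : ℕ) (s : B ⟶ ⨁ fun _ : Fin n => X) (r : (⨁ fun _ : Fin n => X) ⟶ B),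
    s ≫ r = 𝟙 B

noncomputable def retractBiprodLeft {C : Type*} [Category C] [HasZeroMorphisms C] (X Y : C)
    [HasBinaryBiproduct X Y] : Retract X (X ⊞ Y) :=
  ⟨biprod.inl, biprod.fst, biprod.inl_fst⟩

noncomputable def retractBiprodRight {C : Type*} [Category C] [HasZeroMorphisms C] (X Y : C)
    [HasBinaryBiproduct X Y] : Retract Y (X ⊞ Y) :=
  ⟨biprod.inr, biprod.snd, biprod.inr_snd⟩

section Generation

variable {C : Type*} [Category C] [Preadditive C] [HasZeroObject C] [HasShift C ℤ]
  [∀ n : ℤ, (shiftFunctor C n).Additive] [Pretriangulated C]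

namespace triangGen

lemma trans {G G' X : C} (hG : triangGen G' G) (hX : triangGen G X) : triangGen G' X := by
  induction hX with
  | gen => exact hG
  | iso e _ ih => exact .iso e ih
  | shift n _ ih => exact .shift n ih
  | ext f g h hT _ _ ih₁ ih₂ => exact .ext f g h hT ih₁ ih₂
  | smd s r hr _ ih => exact .smd s r hr ih

lemma of_retract {G X Y : C} (e : Retract Y X) (hX : triangGen G X) : triangGen G Y :=
  .smd e.i e.r e.retract hX

lemma biprod {G X Y : C} [HasBinaryBiproduct X Y] (hX : triangGen G X) (hY : triangGen G Y) :
    triangGen G (X ⊞ Y) :=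
  .ext _ _ _ (binaryBiproductTriangle_distinguished X Y) hX hY

lemma finBiproduct [HasFiniteBiproducts C] {G X : C} (hX : triangGen G X) (n : ℕ) :
    triangGen G (⨁ fun _ : Fin n => X) := by
  induction n with
  | zero =>
    refine .smd (0 : _ ⟶ G) 0 ?_ .gen
    rw [zero_comp]
    exact (biproduct.hom_ext' _ _ (fun j => j.elim0)).symm
  | succ n ih =>
    refine .smd
      (biprod.lift (biproduct.π (fun _ : Fin (n + 1) => X) 0)
        (biproduct.lift fun i : Fin n => biproduct.π (fun _ : Fin (n + 1) => X) i.succ))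
      (biprod.desc (biproduct.ι (fun _ : Fin (n + 1) => X) 0)
        (biproduct.desc fun i : Fin n => biproduct.ι (fun _ : Fin (n + 1) => X) i.succ))
      ?_ (hX.biprod ih)
    rw [biprod.lift_desc, biproduct.lift_desc,
      ← Fin.sum_univ_succ (fun j => biproduct.π (fun _ : Fin (n + 1) => X) j ≫
        biproduct.ι (fun _ : Fin (n + 1) => X) j)]
    exact biproduct.total

lemma of_memAdd [HasFiniteBiproducts C] {G X B : C} (hX : triangGen G X) (hB : memAdd X B) :
    triangGen G B := by
  obtain ⟨k, s, r, hsr⟩ := hB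
  exact .smd s r hsr (hX.finBiproduct k)

lemma obj₁_of_distTriang {G : C} {T : Triangle C} (hT : T ∈ distTriang C)
    (h₂ : triangGen G T.obj₂) (h₃ : triangGen G T.obj₃) : triangGen G T.obj₁ :=
  .ext _ _ _ (inv_rot_of_distTriang T hT) (.shift (-1) h₃) h₂

end triangGen

end Generation

section Vanishing

variable {C : Type*} [Category C] [Preadditive C] [HasShift C ℤ]

def HomShiftVanishes (X Y : C) (n : ℤ) : Prop :=
  ∀ φ : X ⟶ Y⟦n⟧, φ = 0

namespace HomShiftVanishes

variable {X X' Y Y' : C} {n : ℤ}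

lemma of_retract_left (e : Retract X X') (h : HomShiftVanishes X' Y n) :
    HomShiftVanishes X Y n := fun φ => by
  rw [← Category.id_comp φ, ← e.retract, Category.assoc, h (e.r ≫ φ), comp_zero]

lemma of_retract_right (e : Retract Y Y') (h : HomShiftVanishes X Y' n) :
    HomShiftVanishes X Y n := fun φ => by
  rw [← Category.comp_id φ, ← (e.map (shiftFunctor C n)).retract, ← Category.assoc,
    h (φ ≫ _), zero_comp]

lemma shift_right {a b c : ℤ} (h : HomShiftVanishes X Y c) (hc : a + b = c) :
    HomShiftVanishes X (Y⟦a⟧) b := fun φ => by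
  rw [← cancel_mono ((shiftFunctorAdd' C a b c hc).app Y).inv, zero_comp]
  exact h _

lemma shift_left {a b c : ℤ} (h : HomShiftVanishes X Y b) (hc : b + a = c) :
    HomShiftVanishes (X⟦a⟧) Y c := fun φ => by
  rw [← cancel_mono ((shiftFunctorAdd' C b a c hc).app Y).hom, zero_comp]
  obtain ⟨χ, hχ⟩ := (shiftFunctor C a).map_surjective (φ ≫ _)
  rw [← hχ, h χ, Functor.map_zero]

lemma biprod_left {X₁ X₂ : C} [HasBinaryBiproduct X₁ X₂] (h₁ : HomShiftVanishes X₁ Y n)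
    (h₂ : HomShiftVanishes X₂ Y n) : HomShiftVanishes (X₁ ⊞ X₂) Y n := fun φ =>
  biprod.hom_ext' _ _ (by simpa using h₁ _) (by simpa using h₂ _)

lemma finBiproduct_left [HasFiniteBiproducts C] (h : HomShiftVanishes X Y n) (k : ℕ) :
    HomShiftVanishes (⨁ fun _ : Fin k => X) Y n := fun φ =>
  biproduct.hom_ext' _ _ fun j => by simpa using h _

lemma of_memAdd_left [HasFiniteBiproducts C] {B : C} (hB : memAdd X B)
    (h : HomShiftVanishes X Y n) : HomShiftVanishes B Y n :=
  let ⟨k, s, r, hsr⟩ := hB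
  of_retract_left ⟨s, r, hsr⟩ (h.finBiproduct_left k)

variable [∀ n : ℤ, (shiftFunctor C n).Additive]

lemma biprod_right {Y₁ Y₂ : C} [HasBinaryBiproduct Y₁ Y₂] (h₁ : HomShiftVanishes X Y₁ n)
    (h₂ : HomShiftVanishes X Y₂ n) : HomShiftVanishes X (Y₁ ⊞ Y₂) n := fun φ => by
  rw [← Category.comp_id φ, ← CategoryTheory.Functor.map_id, ← biprod.total, Functor.map_add,
    Functor.map_comp, Functor.map_comp, Preadditive.comp_add, ← Category.assoc, ← Category.assoc,
    h₁ (φ ≫ _), h₂ (φ ≫ _), zero_comp, zero_comp, add_zero]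

lemma finBiproduct_right [HasFiniteBiproducts C] (h : HomShiftVanishes X Y n) (k : ℕ) :
    HomShiftVanishes X (⨁ fun _ : Fin k => Y) n := fun φ => by
  rw [← Category.comp_id φ, ← CategoryTheory.Functor.map_id, ← biproduct.total,
    Functor.map_sum, Preadditive.comp_sum]
  exact Finset.sum_eq_zero fun j _ => by
    rw [Functor.map_comp, ← Category.assoc, h (φ ≫ _), zero_comp]

variable [HasFiniteBiproducts C] {B : C}

lemma of_memAdd_right (hB : memAdd Y B) (h : HomShiftVanishes X Y n) : HomShiftVanishes X B n :=
  let ⟨k, s, r, hsr⟩ := hB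
  of_retract_right ⟨s, r, hsr⟩ (h.finBiproduct_right k)

end HomShiftVanishes

end Vanishing

section Triangles

variable {C : Type*} [Category C] [Preadditive C] [HasZeroObject C] [HasShift C ℤ]
  [∀ n : ℤ, (shiftFunctor C n).Additive] [Pretriangulated C]
  {T : Triangle C} (hT : T ∈ distTriang C) {W : C}
include hT

lemma homShiftVanishes_to_obj₃ {n : ℤ} (h₂ : HomShiftVanishes W T.obj₂ n)
    (h₁ : HomShiftVanishes W T.obj₁ (n + 1)) : HomShiftVanishes W T.obj₃ n := fun φ => by
  obtain ⟨ψ, rfl⟩ := Triangle.coyoneda_exact₃ _ (Triangle.shift_distinguished T hT n) φ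
    ((h₁.shift_right rfl) _)
  rw [h₂ ψ]
  exact zero_comp

lemma homShiftVanishes_to_obj₃_neg_one (h₂ : HomShiftVanishes W T.obj₂ (-1))
    (h₁ : ∀ u : W ⟶ T.obj₁, u ≫ T.mor₁ = 0 → u = 0) : HomShiftVanishes W T.obj₃ (-1) :=
  fun φ => by
  have hT' := inv_rot_of_distTriang T hT
  -- `T.invRotate.invRotate` is `X₂⟦-1⟧ ⟶ X₃⟦-1⟧ ⟶ X₁ ⟶ X₂⟦-1⟧⟦1⟧`.
  obtain ⟨ψ, rfl⟩ := Triangle.coyoneda_exact₂ _ (inv_rot_of_distTriang _ hT') φ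
    (h₁ _ ((Category.assoc _ _ _).trans
      ((φ ≫= comp_distTriang_mor_zero₁₂ _ hT').trans comp_zero)))
  rw [h₂ ψ]
  exact zero_comp

lemma homShiftVanishes_from_obj₃ {n : ℤ} (h₂ : HomShiftVanishes T.obj₂ W n)
    (h₁ : HomShiftVanishes T.obj₁ W (n - 1)) : HomShiftVanishes T.obj₃ W n := fun φ => by
  obtain ⟨ψ, rfl⟩ := Triangle.yoneda_exact₃ _ hT φ (h₂ _)
  rw [h₁.shift_left (by ring) ψ, comp_zero]

lemma homShiftVanishes_from_obj₃_one (h₂ : HomShiftVanishes T.obj₂ W 1)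
    (h₁ : ∀ u : T.obj₁ ⟶ W, T.mor₃ ≫ u⟦(1 : ℤ)⟧' = 0) : HomShiftVanishes T.obj₃ W 1 :=
  fun φ => by
  obtain ⟨ψ, rfl⟩ := Triangle.yoneda_exact₃ _ hT φ (h₂ _)
  obtain ⟨u, rfl⟩ := (shiftFunctor C (1 : ℤ)).map_surjective ψ
  exact h₁ u

end Triangles

section Mutation

variable {C : Type*} [Category C] [Preadditive C] [HasZeroObject C] [HasShift C ℤ]
  [∀ n : ℤ, (shiftFunctor C n).Additive] [Pretriangulated C] [HasFiniteBiproducts C]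
  {T₀ T₁ B Tstar : C} {f : T₀ ⟶ B} {g : B ⟶ Tstar} {h : Tstar ⟶ T₀⟦(1 : ℤ)⟧}
  (hT : Triangle.mk f g h ∈ distTriang C) (hB : memAdd T₁ B)
include hT hB

lemma homShiftVanishes_summand_cone (h₁₀ : ∀ n ≠ 0, HomShiftVanishes T₁ T₀ n)
    (h₁₁ : ∀ n ≠ 0, HomShiftVanishes T₁ T₁ n) (hf : ∀ u u' : T₁ ⟶ T₀, u ≫ f = u' ≫ f → u = u')
    {n : ℤ} (hn : n ≠ 0) : HomShiftVanishes T₁ Tstar n := by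
  have h₁B : HomShiftVanishes T₁ B n := (h₁₁ n hn).of_memAdd_right hB
  obtain rfl | hn' := eq_or_ne n (-1)
  · exact homShiftVanishes_to_obj₃_neg_one hT h₁B fun u hu => hf u 0 (by rwa [zero_comp])
  · exact homShiftVanishes_to_obj₃ hT h₁B (h₁₀ (n + 1) (by omega))

lemma homShiftVanishes_cone_summand (h₀₁ : ∀ n ≠ 0, HomShiftVanishes T₀ T₁ n)
    (h₁₁ : ∀ n ≠ 0, HomShiftVanishes T₁ T₁ n) (hf : ∀ u : T₀ ⟶ T₁, ∃ v : B ⟶ T₁, f ≫ v = u)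
    {n : ℤ} (hn : n ≠ 0) : HomShiftVanishes Tstar T₁ n := by
  have hB₁ : HomShiftVanishes B T₁ n := (h₁₁ n hn).of_memAdd_left hB
  obtain rfl | hn' := eq_or_ne n 1
  · refine homShiftVanishes_from_obj₃_one hT hB₁ fun u => ?_
    obtain ⟨v, rfl⟩ := hf u
    have hhf : h ≫ f⟦(1 : ℤ)⟧' = 0 := comp_distTriang_mor_zero₃₁ _ hT
    change h ≫ (f ≫ v)⟦(1 : ℤ)⟧' = 0
    rw [Functor.map_comp, ← Category.assoc, hhf, zero_comp]
  · exact homShiftVanishes_from_obj₃ hT hB₁ (h₀₁ (n - 1) (by omega))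

lemma homShiftVanishes_cone_cone (h₀₀ : ∀ n ≠ 0, HomShiftVanishes T₀ T₀ n)
    (h₀₁ : ∀ n ≠ 0, HomShiftVanishes T₀ T₁ n) (h₁S : ∀ n ≠ 0, HomShiftVanishes T₁ Tstar n)
    (hS₁ : ∀ n ≠ 0, HomShiftVanishes Tstar T₁ n) {n : ℤ} (hn : n ≠ 0) :
    HomShiftVanishes Tstar Tstar n := by
  have hBS : HomShiftVanishes B Tstar n := (h₁S n hn).of_memAdd_left hB
  obtain rfl | hn' := eq_or_ne n 1
  · refine homShiftVanishes_from_obj₃_one hT hBS fun u => ?_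
    obtain ⟨a, ha⟩ : ∃ a : T₀ ⟶ B, u = a ≫ g :=
      Triangle.coyoneda_exact₃ _ hT u (h₀₀ 1 one_ne_zero _)
    change h ≫ u⟦(1 : ℤ)⟧' = 0
    rw [ha, Functor.map_comp, ← Category.assoc, (hS₁ 1 one_ne_zero).of_memAdd_right hB (h ≫ _)]
    exact zero_comp
  · refine homShiftVanishes_from_obj₃ hT hBS (homShiftVanishes_to_obj₃ hT ?_ ?_)
    · exact (h₀₁ (n - 1) (by omega)).of_memAdd_right hB
    · exact h₀₀ (n - 1 + 1) (by omega)

lemma triangGen_cone_biprod : triangGen (Tstar ⊞ T₁) (T₀ ⊞ T₁) :=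
  have h₁ : triangGen (Tstar ⊞ T₁) T₁ := .of_retract (retractBiprodRight Tstar T₁) .gen
  (triangGen.obj₁_of_distTriang hT (h₁.of_memAdd hB)
    (.of_retract (retractBiprodLeft Tstar T₁) .gen)).biprod h₁

end Mutation

/-- **Tilts of tilting objects in triangulated categories**
(Keller–Yang, Proposition 6.3).

Let `T` be a triangulated category with suspension `Σ` and let `T₀ ⊞ T₁` be a tilting
object of `T`: the category coincides with the closure of `T₀ ⊞ T₁` under suspensions,
desuspensions, extensions and direct factors, and `Hom(T₀ ⊞ T₁, Σⁿ(T₀ ⊞ T₁)) = 0` for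
all `n ≠ 0`.  Suppose there is a morphism `f : T₀ ⟶ B` such that (1) `B ∈ add T₁`;
(2) `f* : Hom(B, T₁) → Hom(T₀, T₁)` is surjective; (3) `f_* : Hom(T₁, T₀) → Hom(T₁, B)`
is injective.  Choose a triangle `T₀ → B → T₀* → ΣT₀` with first morphism `f`.  Then
`T' = T₀* ⊞ T₁` is again a tilting object of `T`. -/
theorem tilt_of_tilting_object
    (T₀ T₁ B Tstar : T)
    (hgen : ∀ X : T, triangGen (T₀ ⊞ T₁) X)
    (hvanish : ∀ n : ℤ, n ≠ 0 → ∀ φ : (T₀ ⊞ T₁) ⟶ (T₀ ⊞ T₁)⟦n⟧, φ = 0)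
    (f : T₀ ⟶ B)
    (h1 : memAdd T₁ B)
    (h2 : ∀ u : T₀ ⟶ T₁, ∃ v : B ⟶ T₁, f ≫ v = u)
    (h3 : ∀ u u' : T₁ ⟶ T₀, u ≫ f = u' ≫ f → u = u')
    (g : B ⟶ Tstar) (h : Tstar ⟶ T₀⟦(1 : ℤ)⟧)
    (hT : Triangle.mk f g h ∈ distTriang T) :
    (∀ n : ℤ, n ≠ 0 → ∀ φ : (Tstar ⊞ T₁) ⟶ (Tstar ⊞ T₁)⟦n⟧, φ = 0) ∧
      (∀ X : T, triangGen (Tstar ⊞ T₁) X) := by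
  have hsummands {X Y : T} (eX : Retract X (T₀ ⊞ T₁)) (eY : Retract Y (T₀ ⊞ T₁)) :
      ∀ n ≠ 0, HomShiftVanishes X Y n := fun n hn =>
    (HomShiftVanishes.of_retract_left eX (hvanish n hn)).of_retract_right eY
  have h₀₀ := hsummands (retractBiprodLeft T₀ T₁) (retractBiprodLeft T₀ T₁)
  have h₀₁ := hsummands (retractBiprodLeft T₀ T₁) (retractBiprodRight T₀ T₁)
  have h₁₀ := hsummands (retractBiprodRight T₀ T₁) (retractBiprodLeft T₀ T₁)
  have h₁₁ := hsummands (retractBiprodRight T₀ T₁) (retractBiprodRight T₀ T₁)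
  have h₁S : ∀ n ≠ 0, HomShiftVanishes T₁ Tstar n := fun _ =>
    homShiftVanishes_summand_cone hT h1 h₁₀ h₁₁ h3
  have hS₁ : ∀ n ≠ 0, HomShiftVanishes Tstar T₁ n := fun _ =>
    homShiftVanishes_cone_summand hT h1 h₀₁ h₁₁ h2
  have hSS : ∀ n ≠ 0, HomShiftVanishes Tstar Tstar n := fun _ =>
    homShiftVanishes_cone_cone hT h1 h₀₀ h₀₁ h₁S hS₁
  refine ⟨fun n hn => ?_, fun X => (triangGen_cone_biprod hT h1).trans (hgen X)⟩
  exact ((hSS n hn).biprod_right (hS₁ n hn)).biprod_left ((h₁S n hn).biprod_right (h₁₁ n hn))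

end Statement
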